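/- arXiv:1904.12009 — 2 statements merged into one kernel-verified Lean document; each statement's English description precedes it below -/
import Mathlib

section
/- Let T₁, …, T_R be independent nonnegative random variables, let ε ∈ (0,1), p > 0, and suppose R > p/ε and E[T_i^ε] ≤ M for all i with M ≥ 1. Then E[min{T₁,…,T_R}^p] ≤ 1 + (p/(Rε − p)) · M^R. -/
open MeasureTheory ProbabilityTheory Set

/-!
By Markov's inequality `P(T_i ≥ t) ≤ M t^{-ε}`, so by independence the minimum `Y` of the `T_i`
has the tail bound `P(Y ≥ t) ≤ M^R t^{-Rε}`. In the layer-cake formula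
`E[Y^p] = p ∫₀^∞ t^{p-1} P(Y ≥ t) dt` the tail is bounded by `1` on `(0, 1]`, which contributes `1`,
and by `M^R t^{-Rε}` on `(1, ∞)`, which contributes `p M^R / (Rε - p)` since `Rε > p`.
-/

lemma lintegral_Ioc_zero_one_rpow {s : ℝ} (hs : -1 < s) :
    ∫⁻ t in Ioc (0 : ℝ) 1, ENNReal.ofReal (t ^ s) = ENNReal.ofReal (1 / (s + 1)) := by
  have hint : IntegrableOn (fun t : ℝ => t ^ s) (Ioc 0 1) := by
    simpa [intervalIntegrable_iff, uIoc_of_le zero_le_one] using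
      intervalIntegral.intervalIntegrable_rpow' (a := 0) (b := 1) hs
  rw [← ofReal_integral_eq_lintegral_ofReal hint
      ((ae_restrict_mem measurableSet_Ioc).mono fun t ht => Real.rpow_nonneg ht.1.le s),
    ← intervalIntegral.integral_of_le zero_le_one, integral_rpow (Or.inl hs), Real.one_rpow,
    Real.zero_rpow (by linarith), sub_zero]

lemma lintegral_Ioi_one_rpow {s : ℝ} (hs : s < -1) :
    ∫⁻ t in Ioi (1 : ℝ), ENNReal.ofReal (t ^ s) = ENNReal.ofReal (-1 / (s + 1)) := by
  rw [← ofReal_integral_eq_lintegral_ofReal (integrableOn_Ioi_rpow_of_lt hs one_pos)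
      ((ae_restrict_mem measurableSet_Ioi).mono fun t ht =>
        Real.rpow_nonneg (zero_le_one.trans (le_of_lt ht)) s),
    integral_Ioi_rpow_of_lt hs one_pos, Real.one_rpow]

section

variable {Ω : Type*} [MeasurableSpace Ω] {μ : Measure Ω}

lemma meas_ge_le_of_lintegral_rpow_le {X : Ω → ℝ} (hX : AEMeasurable X μ) {q t m : ℝ}
    (hq : 0 < q) (ht : 0 < t) (hm : ∫⁻ a, ENNReal.ofReal (X a ^ q) ∂μ ≤ ENNReal.ofReal m) :
    μ {a | t ≤ X a} ≤ ENNReal.ofReal (m * t ^ (-q)) := by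
  have htq : 0 < t ^ q := Real.rpow_pos_of_pos ht q
  calc μ {a | t ≤ X a} ≤ μ {a | ENNReal.ofReal (t ^ q) ≤ ENNReal.ofReal (X a ^ q)} :=
        measure_mono fun a ha => ENNReal.ofReal_le_ofReal (Real.rpow_le_rpow ht.le ha hq.le)
    _ ≤ (∫⁻ a, ENNReal.ofReal (X a ^ q) ∂μ) / ENNReal.ofReal (t ^ q) :=
        meas_ge_le_lintegral_div (by fun_prop) (ENNReal.ofReal_pos.mpr htq).ne'
          ENNReal.ofReal_ne_top
    _ ≤ ENNReal.ofReal m / ENNReal.ofReal (t ^ q) := by gcongr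
    _ = ENNReal.ofReal (m * t ^ (-q)) := by
        rw [← ENNReal.ofReal_div_of_pos htq, Real.rpow_neg ht.le, div_eq_mul_inv]

lemma ProbabilityTheory.iIndepFun.meas_ge_iInf_eq_prod {ι : Type*} [Fintype ι] [Nonempty ι]
    {X : ι → Ω → ℝ} (h : iIndepFun X μ) (t : ℝ) :
    μ {a | t ≤ ⨅ i, X i a} = ∏ i, μ {a | t ≤ X i a} := by
  have hinter : {a | t ≤ ⨅ i, X i a} = ⋂ i, X i ⁻¹' Ici t := by
    ext a
    simp [le_ciInf_iff (Finite.bddBelow_range _)]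
  rw [hinter]
  exact h.meas_iInter fun i => ⟨Ici t, measurableSet_Ici, rfl⟩

lemma ProbabilityTheory.iIndepFun.meas_ge_iInf_le_of_lintegral_rpow_le {ι : Type*} [Fintype ι]
    [Nonempty ι] {X : ι → Ω → ℝ} (h : iIndepFun X μ) (hX : ∀ i, AEMeasurable (X i) μ)
    {q t m : ℝ} (hq : 0 < q) (ht : 0 < t) (hm : 0 ≤ m)
    (hmom : ∀ i, ∫⁻ a, ENNReal.ofReal (X i a ^ q) ∂μ ≤ ENNReal.ofReal m) :
    μ {a | t ≤ ⨅ i, X i a} ≤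
      ENNReal.ofReal (m ^ Fintype.card ι * t ^ (-(Fintype.card ι * q))) := by
  rw [h.meas_ge_iInf_eq_prod]
  calc ∏ i, μ {a | t ≤ X i a} ≤ ∏ _i : ι, ENNReal.ofReal (m * t ^ (-q)) :=
        Finset.prod_le_prod' fun i _ => meas_ge_le_of_lintegral_rpow_le (hX i) hq ht (hmom i)
    _ = ENNReal.ofReal ((m * t ^ (-q)) ^ Fintype.card ι) := by
        rw [Finset.prod_const, Finset.card_univ, ENNReal.ofReal_pow (by positivity)]
    _ = ENNReal.ofReal (m ^ Fintype.card ι * t ^ (-(Fintype.card ι * q))) := by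
        rw [mul_pow, ← Real.rpow_natCast (t ^ (-q)), ← Real.rpow_mul ht.le]
        ring_nf

lemma lintegral_rpow_le_of_meas_ge_le [IsProbabilityMeasure μ] {Y : Ω → ℝ} (hY0 : 0 ≤ᵐ[μ] Y)
    (hY : AEMeasurable Y μ) {p q C : ℝ} (hp : 0 < p) (hpq : p < q) (hC : 0 ≤ C)
    (htail : ∀ t, 1 < t → μ {a | t ≤ Y a} ≤ ENNReal.ofReal (C * t ^ (-q))) :
    ∫⁻ a, ENNReal.ofReal (Y a ^ p) ∂μ ≤ ENNReal.ofReal (1 + p / (q - p) * C) := by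
  have hsmall : ∫⁻ t in Ioc (0 : ℝ) 1, μ {a | t ≤ Y a} * ENNReal.ofReal (t ^ (p - 1)) ≤
      ENNReal.ofReal (1 / p) :=
    calc _ ≤ ∫⁻ t in Ioc (0 : ℝ) 1, ENNReal.ofReal (t ^ (p - 1)) :=
          lintegral_mono fun t => mul_le_of_le_one_left zero_le prob_le_one
      _ = ENNReal.ofReal (1 / p) := by
          rw [lintegral_Ioc_zero_one_rpow (by linarith), sub_add_cancel]
  have hlarge : ∫⁻ t in Ioi (1 : ℝ), μ {a | t ≤ Y a} * ENNReal.ofReal (t ^ (p - 1)) ≤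
      ENNReal.ofReal (C / (q - p)) :=
    calc _ ≤ ∫⁻ t in Ioi (1 : ℝ), ENNReal.ofReal C * ENNReal.ofReal (t ^ (p - 1 - q)) := by
          refine setLIntegral_mono' measurableSet_Ioi fun t ht => ?_
          have ht0 : 0 < t := one_pos.trans ht
          calc _ ≤ ENNReal.ofReal (C * t ^ (-q)) * ENNReal.ofReal (t ^ (p - 1)) := by
                gcongr
                exact htail t ht
            _ = ENNReal.ofReal C * ENNReal.ofReal (t ^ (p - 1 - q)) := by
                rw [← ENNReal.ofReal_mul hC, ← ENNReal.ofReal_mul (by positivity), mul_assoc,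
                  ← Real.rpow_add ht0]
                ring_nf
      _ = ENNReal.ofReal (C / (q - p)) := by
          rw [lintegral_const_mul' _ _ ENNReal.ofReal_ne_top,
            lintegral_Ioi_one_rpow (by linarith), ← ENNReal.ofReal_mul hC]
          congr 1
          rw [show p - 1 - q + 1 = -(q - p) by ring, div_neg, neg_div, neg_neg, mul_one_div]
  rw [lintegral_rpow_eq_lintegral_meas_le_mul μ hY0 hY hp,
    ← Ioc_union_Ioi_eq_Ioi zero_le_one,
    lintegral_union measurableSet_Ioi (Ioc_disjoint_Ioi le_rfl)]
  calc _ ≤ ENNReal.ofReal p * (ENNReal.ofReal (1 / p) + ENNReal.ofReal (C / (q - p))) := by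
        gcongr
    _ = ENNReal.ofReal (1 + p / (q - p) * C) := by
        have hqp : 0 < q - p := sub_pos.mpr hpq
        rw [← ENNReal.ofReal_add (by positivity) (by positivity), ← ENNReal.ofReal_mul hp.le]
        congr 1
        field_simp

end

/-- If `T₁,…,T_R` are independent nonnegative random variables with
`E[T_i^ε] ≤ M`, `M ≥ 1`, `ε ∈ (0,1)`, `p > 0` and `Rε > p`, then
`E[minated_i T_i ^ p] ≤ 1 + (p/(Rε−p))·M^R`. -/
theorem stmt_9
    {Ω : Type*} [MeasurableSpace Ω] (P : Measure Ω) [IsProbabilityMeasure P]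
    (R : ℕ) (hR : 0 < R) (T : Fin R → Ω → ℝ)
    (hmeas : ∀ i, Measurable (T i)) (hnonneg : ∀ i a, 0 ≤ T i a)
    (hind : iIndepFun T P)
    (ε : ℝ) (hε : ε ∈ Set.Ioo (0:ℝ) 1) (p : ℝ) (hp : 0 < p)
    (hRp : p / ε < R)
    (M : ℝ) (hM : 1 ≤ M)
    (hmom : ∀ i, ∫⁻ a, ENNReal.ofReal (T i a ^ ε) ∂P ≤ ENNReal.ofReal M) :
    ∫⁻ a, ENNReal.ofReal ((⨅ i, T i a) ^ p) ∂P ≤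
      ENNReal.ofReal (1 + (p / (R * ε - p)) * M ^ R) := by
  have hε0 : 0 < ε := hε.1
  have hpR : p < R * ε := by rwa [div_lt_iff₀ hε0] at hRp
  have : Nonempty (Fin R) := ⟨⟨0, hR⟩⟩
  have htail : ∀ t : ℝ, 1 < t →
      P {a | t ≤ ⨅ i, T i a} ≤ ENNReal.ofReal (M ^ R * t ^ (-(R * ε))) := fun t ht => by
    simpa using hind.meas_ge_iInf_le_of_lintegral_rpow_le (fun i => (hmeas i).aemeasurable) hε0
      (one_pos.trans ht) (zero_le_one.trans hM) hmom
  exact lintegral_rpow_le_of_meas_ge_le (ae_of_all _ fun a => le_ciInf fun i => hnonneg i a)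
    (Measurable.iInf hmeas).aemeasurable hp hpR (by positivity) htail
end

section
/- Let T be a nonnegative random variable, let N be a nonnegative-integer-valued random variable, and suppose that conditioned on {N = n}, T is stochastically dominated by t₁ + ⋯ + t_n where t₁, t₂, … are i.i.d. nonnegative random variables independent of N. If ε ∈ (0,1), K ≥ 1, and P(N ≥ jK) ≤ C e^{−c j} for all j ≥ 1 with constants C, c > 0, then E[T^ε] ≤ K·E[t₁^ε]·(1 + Σ_{j=1}^∞ (j+1)·C e^{−c j}), which is finite. -/
/-!
On `{N = n}` the layer-cake formula turns the conditional domination of `T` into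
`E[T^ε; N = n] ≤ P(N = n) E[(t₁ + ⋯ + t_n)^ε] ≤ n P(N = n) E[t₁^ε]`, using subadditivity of
`x ↦ x^ε` and that every `t_i` has the law of `t₁`. Summing over `n` gives
`E[T^ε] ≤ E[N] E[t₁^ε]`, and `E[N] ≤ K (1 + Σ_{j ≥ 1} (j+1) P(N ≥ jK))` because `n < (j+1)K`
for the largest `j` with `jK ≤ n`.
-/

open MeasureTheory Finset
open scoped ENNReal

theorem Real.rpow_sum_le_sum_rpow {ι : Type*} (s : Finset ι) {f : ι → ℝ} (hf : ∀ i ∈ s, 0 ≤ f i)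
    {p : ℝ} (hp0 : 0 < p) (hp1 : p ≤ 1) : (∑ i ∈ s, f i) ^ p ≤ ∑ i ∈ s, f i ^ p :=
  Finset.le_sum_of_subadditive_on_pred (· ^ p) (0 ≤ ·) (Real.zero_rpow hp0.ne').le
    (fun _ _ hx hy => Real.rpow_add_le_add_rpow hx hy hp0.le hp1) (fun _ _ => add_nonneg) f hf

theorem ENNReal.ofReal_natCast_add_two (j : ℕ) : ENNReal.ofReal ((j : ℝ) + 2) = (j : ℝ≥0∞) + 2 := by
  rw [ENNReal.ofReal_add (by positivity) zero_le_two, ENNReal.ofReal_natCast, ENNReal.ofReal_ofNat]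

theorem ENNReal.ofReal_le_ofReal_mul_one_add_tsum_indicator {K : ℝ} (hK : 0 < K) (x : ℝ) :
    ENNReal.ofReal x ≤ ENNReal.ofReal K *
      (1 + ∑' j : ℕ, ((j : ℝ≥0∞) + 2) * {y : ℝ | ((j : ℝ) + 1) * K ≤ y}.indicator 1 x) := by
  rcases hm : ⌊x / K⌋₊ with _ | j
  · have hxK : x ≤ K := by
      have := Nat.floor_eq_zero.1 hm
      rw [div_lt_one hK] at this
      exact this.le
    calc ENNReal.ofReal x ≤ ENNReal.ofReal K := ENNReal.ofReal_le_ofReal hxK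
      _ ≤ _ := le_mul_of_one_le_right' le_self_add
  · have hone : 1 ≤ x / K := Nat.floor_pos.1 (hm ▸ j.succ_pos)
    have hlow : ((j : ℝ) + 1) * K ≤ x := by
      have := Nat.floor_le (zero_le_one.trans hone)
      rw [hm, le_div_iff₀ hK] at this
      exact_mod_cast this
    have hupp : x ≤ ((j : ℝ) + 2) * K := by
      have := Nat.lt_floor_add_one (x / K)
      rw [hm, div_lt_iff₀ hK] at this
      push_cast at this
      linarith
    calc ENNReal.ofReal x ≤ ENNReal.ofReal K * ((j : ℝ≥0∞) + 2) := by
          rw [← ENNReal.ofReal_natCast_add_two, ← ENNReal.ofReal_mul hK.le, mul_comm]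
          exact ENNReal.ofReal_le_ofReal hupp
      _ = ENNReal.ofReal K * (((j : ℝ≥0∞) + 2) *
            {y : ℝ | ((j : ℝ) + 1) * K ≤ y}.indicator 1 x) := by
          rw [Set.indicator_of_mem (show x ∈ {y : ℝ | ((j : ℝ) + 1) * K ≤ y} from hlow),
            Pi.one_apply, mul_one]
      _ ≤ _ := by gcongr; exact le_add_self.trans' (ENNReal.le_tsum j)

theorem tsum_add_two_mul_le_ofReal_tsum {u : ℕ → ℝ≥0∞} {f : ℕ → ℝ} (hf0 : ∀ j, 0 ≤ f j)
    (hf : Summable fun j : ℕ => ((j : ℝ) + 2) * f j) (hu : ∀ j, u j ≤ ENNReal.ofReal (f j)) :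
    ∑' j : ℕ, ((j : ℝ≥0∞) + 2) * u j ≤ ENNReal.ofReal (∑' j : ℕ, ((j : ℝ) + 2) * f j) := by
  rw [ENNReal.ofReal_tsum_of_nonneg (fun j => mul_nonneg (by positivity) (hf0 j)) hf]
  refine ENNReal.tsum_le_tsum fun j => ?_
  rw [ENNReal.ofReal_mul (by positivity), ENNReal.ofReal_natCast_add_two]
  gcongr
  exact hu j

theorem Real.summable_add_two_mul_exp_neg {c : ℝ} (hc : 0 < c) (C : ℝ) :
    Summable fun j : ℕ => ((j : ℝ) + 2) * (C * Real.exp (-c * ((j : ℝ) + 1))) := by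
  refine (((Real.summable_pow_mul_exp_neg_nat_mul 1 hc).add
    ((Real.summable_pow_mul_exp_neg_nat_mul 0 hc).mul_left 2)).mul_left
      (C * Real.exp (-c))).congr fun j => ?_
  rw [show -c * ((j : ℝ) + 1) = -c + -c * j by ring, Real.exp_add]
  ring

section

variable {α β : Type*} [MeasurableSpace α] [MeasurableSpace β] {μ : Measure α} {ν : Measure β}

theorem lintegral_comp_eq_of_measure_le_eq [IsFiniteMeasure μ] {X : α → ℝ} {Y : β → ℝ}
    (hX : Measurable X) (hY : Measurable Y) (h : ∀ y, μ {a | X a ≤ y} = ν {b | Y b ≤ y})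
    {g : ℝ → ℝ≥0∞} (hg : Measurable g) : ∫⁻ a, g (X a) ∂μ = ∫⁻ b, g (Y b) ∂ν := by
  have hmap : μ.map X = ν.map Y := Measure.ext_of_Iic _ _ fun y => by
    rw [Measure.map_apply hX measurableSet_Iic, Measure.map_apply hY measurableSet_Iic]
    exact h y
  rw [← lintegral_map hg hX, hmap, lintegral_map hg hY]

theorem lintegral_le_lintegral_of_forall_fiber {γ : Type*} [Countable γ] [MeasurableSpace γ]
    [MeasurableSingletonClass γ] {N : α → γ} (hN : Measurable N) {f g : α → ℝ≥0∞}
    (h : ∀ n, ∫⁻ a in N ⁻¹' {n}, f a ∂μ ≤ ∫⁻ a in N ⁻¹' {n}, g a ∂μ) :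
    ∫⁻ a, f a ∂μ ≤ ∫⁻ a, g a ∂μ := by
  have hfib : ∀ φ : α → ℝ≥0∞, ∫⁻ a, φ a ∂μ = ∑' n, ∫⁻ a in N ⁻¹' {n}, φ a ∂μ := fun φ => by
    rw [← lintegral_iUnion (fun n => hN (measurableSet_singleton n))
      (fun m n hmn => (Set.disjoint_singleton.2 hmn).preimage N), ← Set.preimage_iUnion,
      Set.iUnion_singleton_eq_range, Set.range_id', Set.preimage_univ, Measure.restrict_univ]
  rw [hfib f, hfib g]
  exact ENNReal.tsum_le_tsum h

theorem setLIntegral_ofReal_le_mul_lintegral_ofReal {X : α → ℝ} {Y : β → ℝ} {s : Set α}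
    (hX : Measurable X) (hX0 : ∀ a, 0 ≤ X a) (hY : Measurable Y) (hY0 : ∀ b, 0 ≤ Y b)
    (h : ∀ y, 0 < y → μ ({a | y < X a} ∩ s) ≤ μ s * ν {b | y < Y b}) :
    ∫⁻ a in s, ENNReal.ofReal (X a) ∂μ ≤ μ s * ∫⁻ b, ENNReal.ofReal (Y b) ∂ν := by
  have htail_anti : Antitone fun y => ν {b | y < Y b} := fun y z hyz =>
    measure_mono fun b (hb : z < Y b) => hyz.trans_lt hb
  rw [lintegral_eq_lintegral_meas_lt _ (.of_forall hX0) hX.aemeasurable,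
    lintegral_eq_lintegral_meas_lt _ (.of_forall hY0) hY.aemeasurable,
    ← lintegral_const_mul _ htail_anti.measurable]
  refine setLIntegral_mono' measurableSet_Ioi fun y hy => ?_
  rw [Measure.restrict_apply (measurableSet_lt measurable_const hX)]
  exact h y hy

theorem setLIntegral_ofReal_rpow_le_mul_lintegral_ofReal_rpow {X : α → ℝ} {Y : β → ℝ}
    {s : Set α} (hX : Measurable X) (hX0 : ∀ a, 0 ≤ X a) (hY : Measurable Y)
    (hY0 : ∀ b, 0 ≤ Y b) (h : ∀ y, μ ({a | y < X a} ∩ s) ≤ μ s * ν {b | y < Y b})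
    {p : ℝ} (hp : 0 < p) :
    ∫⁻ a in s, ENNReal.ofReal (X a ^ p) ∂μ ≤ μ s * ∫⁻ b, ENNReal.ofReal (Y b ^ p) ∂ν := by
  refine setLIntegral_ofReal_le_mul_lintegral_ofReal (hX.pow_const p)
    (fun a => Real.rpow_nonneg (hX0 a) p) (hY.pow_const p) (fun b => Real.rpow_nonneg (hY0 b) p)
    fun y hy => ?_
  have hlevel : ∀ x, 0 ≤ x → (y < x ^ p ↔ y ^ p⁻¹ < x) := fun x hx =>
    (Real.rpow_inv_lt_iff_of_pos hy.le hx hp).symm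
  convert h (y ^ p⁻¹) using 3
  · exact Set.ext fun a => hlevel _ (hX0 a)
  · exact Set.ext fun b => hlevel _ (hY0 b)

theorem lintegral_ofReal_rpow_sum_le {ι : Type*} (s : Finset ι) {f : ι → β → ℝ}
    (hf : ∀ i, Measurable (f i)) (hf0 : ∀ i b, 0 ≤ f i b) {p : ℝ} (hp0 : 0 < p) (hp1 : p ≤ 1) :
    ∫⁻ b, ENNReal.ofReal ((∑ i ∈ s, f i b) ^ p) ∂ν ≤
      ∑ i ∈ s, ∫⁻ b, ENNReal.ofReal (f i b ^ p) ∂ν := by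
  rw [← lintegral_finsetSum _ fun i _ => ((hf i).pow_const p).ennreal_ofReal]
  refine lintegral_mono fun b => ?_
  rw [← ENNReal.ofReal_sum_of_nonneg fun i _ => Real.rpow_nonneg (hf0 i b) p]
  exact ENNReal.ofReal_le_ofReal (Real.rpow_sum_le_sum_rpow s (fun i _ => hf0 i b) hp0 hp1)

theorem lintegral_ofReal_le_mul_one_add_tsum_measure_le [IsProbabilityMeasure μ] {X : α → ℝ}
    (hX : Measurable X) {K : ℝ} (hK : 0 < K) :
    ∫⁻ a, ENNReal.ofReal (X a) ∂μ ≤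
      ENNReal.ofReal K * (1 + ∑' j : ℕ, ((j : ℝ≥0∞) + 2) * μ {a | ((j : ℝ) + 1) * K ≤ X a}) := by
  have hind : ∀ j : ℕ,
      Measurable fun a => {y : ℝ | ((j : ℝ) + 1) * K ≤ y}.indicator (1 : ℝ → ℝ≥0∞) (X a) :=
    fun j => (measurable_one.indicator measurableSet_Ici).comp hX
  calc ∫⁻ a, ENNReal.ofReal (X a) ∂μ
      ≤ ∫⁻ a, ENNReal.ofReal K *
          (1 + ∑' j : ℕ, ((j : ℝ≥0∞) + 2) * {y : ℝ | ((j : ℝ) + 1) * K ≤ y}.indicator 1 (X a)) ∂μ :=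
        lintegral_mono fun a => ENNReal.ofReal_le_ofReal_mul_one_add_tsum_indicator hK (X a)
    _ = _ := by
        rw [lintegral_const_mul' _ _ ENNReal.ofReal_ne_top, lintegral_add_left measurable_const,
          lintegral_one, measure_univ,
          lintegral_tsum fun j => ((hind j).const_mul _).aemeasurable]
        congr 2
        refine tsum_congr fun j => ?_
        rw [lintegral_const_mul _ (hind j)]
        congr 1
        exact lintegral_indicator_one (measurableSet_le measurable_const hX)

end

/-- If, conditioned on `{N = n}`, `T` is stochastically dominated by a sum of `n`
i.i.d. nonnegative weights `t_i`, and `P(N ≥ jK) ≤ C e^{−cj}`, then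
`E[T^ε] ≤ K·E[t₁^ε]·(1 + Σ_{j≥1} (j+1)·C e^{−cj}) < ∞`. -/
theorem stmt_10
    {Ω Ω' : Type*} [MeasurableSpace Ω] [MeasurableSpace Ω']
    (P : Measure Ω) (P' : Measure Ω')
    [IsProbabilityMeasure P] [IsProbabilityMeasure P']
    (T : Ω → ℝ) (hT : Measurable T) (hTnn : ∀ a, 0 ≤ T a)
    (N : Ω → ℕ) (hN : Measurable N)
    (t : ℕ → Ω' → ℝ) (htmeas : ∀ i, Measurable (t i)) (htnn : ∀ i b, 0 ≤ t i b)
    (hiid : ∀ i y, P' {b | t i b ≤ y} = P' {b | t 0 b ≤ y})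
    (hdom : ∀ n : ℕ, ∀ y : ℝ,
      P ({a | y < T a} ∩ {a | N a = n}) ≤
        P {a | N a = n} * P' {b | y < ∑ i ∈ Finset.range n, t i b})
    (ε : ℝ) (hε : ε ∈ Set.Ioo (0:ℝ) 1)
    (Et : ℝ) (hEt : ∫⁻ b, ENNReal.ofReal (t 0 b ^ ε) ∂P' = ENNReal.ofReal Et)
    (K : ℝ) (hK : 1 ≤ K) (C c : ℝ) (hC : 0 < C) (hc : 0 < c)
    (htail : ∀ j : ℕ, 1 ≤ j →
      P {a | (j : ℝ) * K ≤ (N a : ℝ)} ≤ ENNReal.ofReal (C * Real.exp (-c * j))) :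
    ∫⁻ a, ENNReal.ofReal (T a ^ ε) ∂P ≤
      ENNReal.ofReal (K * Et * (1 + ∑' j : ℕ, ((j:ℝ) + 2) * (C * Real.exp (-c * ((j:ℝ) + 1))))) := by
  obtain ⟨hε0, hε1⟩ := hε
  have hK0 : 0 < K := by linarith
  set S := ∑' j : ℕ, ((j:ℝ) + 2) * (C * Real.exp (-c * ((j:ℝ) + 1)))
  have hS : 0 ≤ S := tsum_nonneg fun j => by positivity
  have hEti : ∀ i, ∫⁻ b, ENNReal.ofReal (t i b ^ ε) ∂P' = ENNReal.ofReal Et := fun i =>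
    hEt ▸ lintegral_comp_eq_of_measure_le_eq (htmeas i) (htmeas 0) (hiid i)
      (measurable_id.pow_const ε).ennreal_ofReal
  have hfiber : ∀ n, ∫⁻ a in N ⁻¹' {n}, ENNReal.ofReal (T a ^ ε) ∂P ≤
      ∫⁻ a in N ⁻¹' {n}, ENNReal.ofReal (N a) * ENNReal.ofReal Et ∂P := fun n => calc
    _ ≤ P (N ⁻¹' {n}) * ∫⁻ b, ENNReal.ofReal ((∑ i ∈ range n, t i b) ^ ε) ∂P' :=
        setLIntegral_ofReal_rpow_le_mul_lintegral_ofReal_rpow hT hTnn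
          (Finset.measurable_sum _ fun i _ => htmeas i) (fun b => sum_nonneg fun i _ => htnn i b)
          (hdom n) hε0
    _ ≤ P (N ⁻¹' {n}) * (n * ENNReal.ofReal Et) := by
        gcongr
        refine (lintegral_ofReal_rpow_sum_le _ htmeas htnn hε0 hε1.le).trans_eq ?_
        simp [hEti]
    _ = _ := by
        rw [setLIntegral_congr_fun (hN (measurableSet_singleton n))
          fun a (ha : N a = n) => by rw [ha], setLIntegral_const, ENNReal.ofReal_natCast]
        ring
  have hNreal : Measurable fun a => (N a : ℝ) := measurable_from_nat.comp hN
  calc ∫⁻ a, ENNReal.ofReal (T a ^ ε) ∂P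
      ≤ ∫⁻ a, ENNReal.ofReal (N a) * ENNReal.ofReal Et ∂P :=
        lintegral_le_lintegral_of_forall_fiber hN hfiber
    _ = (∫⁻ a, ENNReal.ofReal (N a) ∂P) * ENNReal.ofReal Et :=
        lintegral_mul_const _ hNreal.ennreal_ofReal
    _ ≤ ENNReal.ofReal K * (1 + ENNReal.ofReal S) * ENNReal.ofReal Et := by
        gcongr
        refine (lintegral_ofReal_le_mul_one_add_tsum_measure_le hNreal hK0).trans ?_
        gcongr
        refine tsum_add_two_mul_le_ofReal_tsum (fun j => by positivity)
          (Real.summable_add_two_mul_exp_neg hc C) fun j => ?_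
        exact_mod_cast htail (j + 1) j.succ_pos
    _ = ENNReal.ofReal (K * Et * (1 + S)) := by
        rw [mul_right_comm K, ENNReal.ofReal_mul (by positivity), ENNReal.ofReal_mul hK0.le,
          ENNReal.ofReal_add zero_le_one hS, ENNReal.ofReal_one]
end
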